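/- Let G be a finite hypergroup. Define Com(G) = {h : h ≺ x x̄ for some basis element x} and Com(G)^L = {y : y ≺ x₁⋯x_L for some x₁,…,x_L ∈ Com(G)}. Then the ascending chain Com(G) ⊆ Com(G)² ⊆ ⋯ stabilizes to a limit Com(G)^∞, and Com(G)^∞ is a supernormal subhypergroup of G: it is closed under involution, ℝCom(G)^∞ is closed under products, and x · Com(G)^∞ · x̄ ⊆ Com(G)^∞ for every x ∈ G. Moreover, every supernormal subhypergroup H of G contains Com(G)^∞. -/

import Mathlib

/-- A finite hypergroup: a finite basis set with involution `inv`, identity `e`,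
and nonnegative real structure constants `N x y z` (the coefficient of `z` in
the product `x·y`) making ℝA an associative unital algebra, with the involution
an anti-automorphism, and with `N x y e ≠ 0` iff `y = inv x`. -/
structure Hypergroup (A : Type) [Fintype A] [DecidableEq A] where
  N : A → A → A → ℝ
  e : A
  inv : A → A
  N_nonneg : ∀ x y z, 0 ≤ N x y z
  inv_inv : ∀ x, inv (inv x) = x
  one_mul : ∀ x z, N e x z = if z = x then 1 else 0
  mul_one : ∀ x z, N x e z = if z = x then 1 else 0
  assoc : ∀ x y z w, ∑ u, N x y u * N u z w = ∑ u, N y z u * N x u w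
  inv_anti : ∀ x y z, N (inv y) (inv x) (inv z) = N x y z
  dual : ∀ x y, N x y e ≠ 0 ↔ y = inv x

namespace Hypergroup

variable {A : Type} [Fintype A] [DecidableEq A]

/-- The coefficient of a basis element `z` in the product `x₁ ⋯ xₙ` of a list
of basis elements (the empty product being the identity `e`). -/
def coeff (H : Hypergroup A) : List A → A → ℝ
  | [], z => if z = H.e then 1 else 0
  | x :: l, z => ∑ y, H.coeff l y * H.N x y z

end Hypergroup

/-- `Com H` is the set of basis elements appearing in some product x·x̄. -/
def Hypergroup.Com {A : Type} [Fintype A] [DecidableEq A] (H : Hypergroup A) : Set A :=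
  {h | ∃ x, 0 < H.N x (H.inv x) h}

/-- `ComL H L` is the set of basis elements appearing in some product of L
elements of `Com H`. -/
def Hypergroup.ComL {A : Type} [Fintype A] [DecidableEq A] (H : Hypergroup A)
    (L : ℕ) : Set A :=
  {y | ∃ l : List A, l.length = L ∧ (∀ z ∈ l, z ∈ H.Com) ∧ 0 < H.coeff l y}

/-!
Only supports of products matter, and at that level associativity and Frobenius reciprocity
(`z ≺ x y ⇒ x̄ ≺ y z̄`) are all that is used. Since `e ∈ Com`, the sets `Com^L` increase, and
they stabilize because `A` is finite. `Com^L Com^M ⊆ Com^(L+M)` and `Com^L` is closed under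
the involution, so the limit is a subhypergroup. For supernormality, `p ≺ x̄ x p` gives
`x c m x̄ ⊆ (x c x̄)(x m x̄)`, and `x c x̄ ⊆ Com²` for `c ∈ Com`, whence
`x Com^L x̄ ⊆ Com^(2L+1)`. Conversely a supernormal subhypergroup contains `e` and hence every
`c ≺ x e x̄`, i.e. all of `Com`, and therefore every `Com^L`.
-/

lemma sum_mul_pos_iff {ι R : Type*} [Fintype ι] [Semiring R] [LinearOrder R]
    [IsStrictOrderedRing R] {f g : ι → R} (hf : ∀ i, 0 ≤ f i) (hg : ∀ i, 0 ≤ g i) :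
    0 < ∑ i, f i * g i ↔ ∃ i, 0 < f i ∧ 0 < g i := by
  simp only [Finset.sum_pos_iff_of_nonneg fun i _ => mul_nonneg (hf i) (hg i),
    Finset.mem_univ, true_and]
  exact exists_congr fun i =>
    ⟨fun h => ⟨pos_of_mul_pos_left h (hg i), pos_of_mul_pos_right h (hf i)⟩,
      fun h => mul_pos h.1 h.2⟩

namespace Hypergroup

variable {A : Type} [Fintype A] [DecidableEq A] (H : Hypergroup A)

lemma inv_involutive : Function.Involutive H.inv := H.inv_inv

lemma inv_e : H.inv H.e = H.e :=
  ((H.dual H.e H.e).mp (by simp [H.one_mul])).symm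

lemma N_e_left_pos_iff {x z : A} : 0 < H.N H.e x z ↔ z = x := by
  rw [H.one_mul]; split_ifs <;> simp [*]

lemma N_e_right_pos_iff {x z : A} : 0 < H.N x H.e z ↔ z = x := by
  rw [H.mul_one]; split_ifs <;> simp [*]

lemma N_self_inv_e_pos (x : A) : 0 < H.N x (H.inv x) H.e :=
  (H.N_nonneg _ _ _).lt_of_ne' ((H.dual x _).mpr rfl)

lemma N_inv_self_e_pos (x : A) : 0 < H.N (H.inv x) x H.e := by
  simpa only [H.inv_inv] using H.N_self_inv_e_pos (H.inv x)

lemma N_e_eq_zero_of_ne_inv {x u : A} (hu : u ≠ H.inv x) : H.N x u H.e = 0 :=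
  not_not.mp (mt (H.dual x u).mp hu)

/-- Frobenius reciprocity: both sides are the coefficient of `e` in `x y z̄`. -/
lemma N_mul_N_self_inv_e (x y z : A) :
    H.N x y z * H.N z (H.inv z) H.e = H.N y (H.inv z) (H.inv x) * H.N x (H.inv x) H.e := by
  have h := H.assoc x y (H.inv z) H.e
  rwa [Fintype.sum_eq_single z fun u hu => by
      rw [H.N_e_eq_zero_of_ne_inv (H.inv_involutive.injective.ne hu.symm), mul_zero],
    Fintype.sum_eq_single (H.inv x) fun u hu => by
      rw [H.N_e_eq_zero_of_ne_inv hu, mul_zero]] at h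

lemma N_pos_rotate {x y z : A} (h : 0 < H.N x y z) : 0 < H.N y (H.inv z) (H.inv x) := by
  have h' := H.N_mul_N_self_inv_e x y z ▸ mul_pos h (H.N_self_inv_e_pos z)
  exact pos_of_mul_pos_left h' (H.N_self_inv_e_pos x).le

lemma N_pos_inv_left {x y z : A} (h : 0 < H.N x y z) : 0 < H.N (H.inv x) z y := by
  have h' := H.N_pos_rotate (H.N_pos_rotate h)
  rwa [H.inv_inv, ← H.inv_anti, H.inv_inv, H.inv_inv] at h'

lemma exists_N_pos_assoc {x y z t w : A} (h₁ : 0 < H.N x y t) (h₂ : 0 < H.N t z w) :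
    ∃ v, 0 < H.N y z v ∧ 0 < H.N x v w := by
  have h := (sum_mul_pos_iff (H.N_nonneg x y) (H.N_nonneg · z w)).mpr ⟨t, h₁, h₂⟩
  rwa [H.assoc, sum_mul_pos_iff (H.N_nonneg y z) (H.N_nonneg x · w)] at h

lemma exists_N_pos_assoc' {x y z t w : A} (h₁ : 0 < H.N y z t) (h₂ : 0 < H.N x t w) :
    ∃ v, 0 < H.N x y v ∧ 0 < H.N v z w := by
  have h := (sum_mul_pos_iff (H.N_nonneg y z) (H.N_nonneg x · w)).mpr ⟨t, h₁, h₂⟩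
  rwa [← H.assoc, sum_mul_pos_iff (H.N_nonneg x y) (H.N_nonneg · z w)] at h

lemma exists_N_pos_and_N_pos_inv (x y : A) : ∃ v, 0 < H.N x y v ∧ 0 < H.N (H.inv x) v y :=
  H.exists_N_pos_assoc (H.N_inv_self_e_pos x) (H.N_e_left_pos_iff.mpr rfl)

lemma coeff_nonneg (l : List A) (z : A) : 0 ≤ H.coeff l z := by
  induction l generalizing z with
  | nil => simp only [coeff]; split_ifs <;> norm_num
  | cons x l ih => exact Finset.sum_nonneg fun y _ => mul_nonneg (ih y) (H.N_nonneg x y z)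

lemma coeff_nil_pos_iff {z : A} : 0 < H.coeff [] z ↔ z = H.e := by
  simp only [coeff]; split_ifs <;> simp [*]

lemma coeff_cons_pos_iff {x z : A} {l : List A} :
    0 < H.coeff (x :: l) z ↔ ∃ t, 0 < H.coeff l t ∧ 0 < H.N x t z :=
  sum_mul_pos_iff (H.coeff_nonneg l) (H.N_nonneg x · z)

lemma coeff_conj_pos_iff {x h y : A} :
    0 < H.coeff [x, h, H.inv x] y ↔ ∃ t, 0 < H.N h (H.inv x) t ∧ 0 < H.N x t y := by
  simp [coeff_cons_pos_iff, coeff_nil_pos_iff, N_e_right_pos_iff]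

lemma com_inv {c : A} (hc : c ∈ H.Com) : H.inv c ∈ H.Com := by
  obtain ⟨x, hx⟩ := hc
  exact ⟨x, by rwa [← H.inv_anti, H.inv_inv] at hx⟩

lemma e_mem_com : H.e ∈ H.Com := ⟨H.e, H.N_self_inv_e_pos H.e⟩

lemma comL_zero : H.ComL 0 = {H.e} := by
  ext y
  simp [ComL, coeff_nil_pos_iff]

lemma mem_comL_succ {L : ℕ} {y : A} :
    y ∈ H.ComL (L + 1) ↔ ∃ c ∈ H.Com, ∃ m ∈ H.ComL L, 0 < H.N c m y := by
  constructor
  · rintro ⟨_ | ⟨c, l⟩, hl, hmem, hpos⟩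
    · simp at hl
    · obtain ⟨m, hm, hcm⟩ := H.coeff_cons_pos_iff.mp hpos
      rw [List.forall_mem_cons] at hmem
      exact ⟨c, hmem.1, m, ⟨l, by simpa using hl, hmem.2, hm⟩, hcm⟩
  · rintro ⟨c, hc, m, ⟨l, hl, hmem, hm⟩, hcm⟩
    exact ⟨c :: l, by simp [hl], List.forall_mem_cons.mpr ⟨hc, hmem⟩,
      H.coeff_cons_pos_iff.mpr ⟨m, hm, hcm⟩⟩

lemma com_subset_comL_one : H.Com ⊆ H.ComL 1 := fun c hc =>
  H.mem_comL_succ.mpr ⟨c, hc, H.e, by simp [comL_zero], H.N_e_right_pos_iff.mpr rfl⟩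

lemma comL_subset_comL_succ (L : ℕ) : H.ComL L ⊆ H.ComL (L + 1) := fun y hy =>
  H.mem_comL_succ.mpr ⟨H.e, H.e_mem_com, y, hy, H.N_e_left_pos_iff.mpr rfl⟩

lemma exists_forall_ge_comL_eq : ∃ L₀, ∀ L, L₀ ≤ L → H.ComL L = H.ComL L₀ := by
  obtain ⟨L₀, hL₀⟩ := wellFoundedGT_iff_monotone_chain_condition.mp inferInstance
    ⟨H.ComL, monotone_nat_of_le_succ H.comL_subset_comL_succ⟩
  exact ⟨L₀, fun L hL => (hL₀ L hL).symm⟩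

lemma mem_comL_add {L₁ L₂ : ℕ} {x y z : A} (hx : x ∈ H.ComL L₁) (hy : y ∈ H.ComL L₂)
    (hz : 0 < H.N x y z) : z ∈ H.ComL (L₁ + L₂) := by
  induction L₁ generalizing x z with
  | zero =>
    rw [comL_zero, Set.mem_singleton_iff] at hx
    subst hx
    rwa [zero_add, H.N_e_left_pos_iff.mp hz]
  | succ L₁ ih =>
    obtain ⟨c, hc, m, hm, hcm⟩ := H.mem_comL_succ.mp hx
    obtain ⟨v, hmv, hcv⟩ := H.exists_N_pos_assoc hcm hz
    rw [Nat.add_right_comm]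
    exact H.mem_comL_succ.mpr ⟨c, hc, v, ih hm hmv, hcv⟩

lemma inv_mem_comL {L : ℕ} {x : A} (hx : x ∈ H.ComL L) : H.inv x ∈ H.ComL L := by
  induction L generalizing x with
  | zero =>
    rw [comL_zero, Set.mem_singleton_iff] at hx ⊢
    rw [hx, inv_e]
  | succ L ih =>
    obtain ⟨c, hc, m, hm, hcm⟩ := H.mem_comL_succ.mp hx
    rw [← H.inv_anti] at hcm
    exact H.mem_comL_add (ih hm) (H.com_subset_comL_one (H.com_inv hc)) hcm

/-- If `c ≺ w w̄`, every `u ≺ x c x̄` satisfies `u ≺ (x x̄)(r̄ r)` for some `r ≺ w̄ x̄`. -/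
lemma mem_comL_two_of_com_conj {x c d u : A} (hc : c ∈ H.Com) (hd : 0 < H.N c (H.inv x) d)
    (hu : 0 < H.N x d u) : u ∈ H.ComL 2 := by
  obtain ⟨w, hw⟩ := hc
  obtain ⟨r, hr, hwr⟩ := H.exists_N_pos_assoc hw hd
  obtain ⟨a, hxa, hau⟩ := H.exists_N_pos_assoc' hwr hu
  have hxr : 0 < H.N x w (H.inv r) := by rwa [← H.inv_anti, H.inv_inv, H.inv_inv] at hr
  obtain ⟨v, hwv, hxv⟩ := H.exists_N_pos_assoc hxa hau
  obtain ⟨m, hm, hmv⟩ := H.exists_N_pos_assoc (H.N_pos_inv_left hxr) hwv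
  obtain ⟨n, hn, hnm⟩ := H.exists_N_pos_assoc' hmv hxv
  have hm_com : m ∈ H.Com := ⟨H.inv r, by rwa [H.inv_inv]⟩
  exact H.mem_comL_add (H.com_subset_comL_one ⟨x, hn⟩) (H.com_subset_comL_one hm_com) hnm

lemma mem_comL_of_conj {L : ℕ} {x h t y : A} (hh : h ∈ H.ComL L)
    (ht : 0 < H.N h (H.inv x) t) (hy : 0 < H.N x t y) : y ∈ H.ComL (2 * L + 1) := by
  induction L generalizing h t y with
  | zero =>
    rw [comL_zero, Set.mem_singleton_iff] at hh
    subst hh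
    rw [H.N_e_left_pos_iff.mp ht] at hy
    exact H.com_subset_comL_one ⟨x, hy⟩
  | succ L ih =>
    -- `y ≺ x c m x̄ ⊆ (x c x̄)(x m x̄)`, since `p ≺ x̄ x p` for every `p`
    obtain ⟨c, hc, m, hm, hcm⟩ := H.mem_comL_succ.mp hh
    obtain ⟨p, hmp, hcp⟩ := H.exists_N_pos_assoc hcm ht
    obtain ⟨v, hpv, hvp⟩ := H.exists_N_pos_and_N_pos_inv x p
    obtain ⟨d, hcd, hdv⟩ := H.exists_N_pos_assoc' hvp hcp
    obtain ⟨u, hdu, huy⟩ := H.exists_N_pos_assoc' hdv hy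
    have h := H.mem_comL_add (H.mem_comL_two_of_com_conj hc hcd hdu) (ih hm hmp hpv) huy
    rwa [show 2 + (2 * L + 1) = 2 * (L + 1) + 1 by ring] at h

lemma comL_subset_of_supernormal {S : Set A} (hne : S.Nonempty) (hinv : ∀ x ∈ S, H.inv x ∈ S)
    (hmul : ∀ x ∈ S, ∀ y ∈ S, ∀ z, H.N x y z ≠ 0 → z ∈ S)
    (hconj : ∀ x : A, ∀ h ∈ S, ∀ y, 0 < H.coeff [x, h, H.inv x] y → y ∈ S) (L : ℕ) :
    H.ComL L ⊆ S := by
  obtain ⟨a, ha⟩ := hne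
  have he : H.e ∈ S := hmul a ha _ (hinv a ha) H.e (H.N_self_inv_e_pos a).ne'
  have hcom : H.Com ⊆ S := fun c ⟨x, hx⟩ =>
    hconj x H.e he c (H.coeff_conj_pos_iff.mpr ⟨H.inv x, H.N_e_left_pos_iff.mpr rfl, hx⟩)
  induction L with
  | zero => simpa [comL_zero] using he
  | succ L ih =>
    intro y hy
    obtain ⟨c, hc, m, hm, hcm⟩ := H.mem_comL_succ.mp hy
    exact hmul c (hcom hc) m (ih hm) y hcm.ne'

end Hypergroup

/-- The ascending chain Com(G) ⊆ Com(G)² ⊆ ⋯ stabilizes; its limit Com(G)^∞ is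
a supernormal subhypergroup, and it is contained in every supernormal
subhypergroup of G. -/
theorem stmt_18 {A : Type} [Fintype A] [DecidableEq A] (H : Hypergroup A) :
    (∀ L : ℕ, H.ComL L ⊆ H.ComL (L + 1)) ∧
    ∃ L0 : ℕ, (∀ L : ℕ, L0 ≤ L → H.ComL L = H.ComL L0) ∧
      (∀ x ∈ H.ComL L0, H.inv x ∈ H.ComL L0) ∧
      (∀ x ∈ H.ComL L0, ∀ y ∈ H.ComL L0, ∀ z, H.N x y z ≠ 0 → z ∈ H.ComL L0) ∧
      (∀ x : A, ∀ h ∈ H.ComL L0, ∀ y, 0 < H.coeff [x, h, H.inv x] y → y ∈ H.ComL L0) ∧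
      (∀ S : Set A, S.Nonempty → (∀ x ∈ S, H.inv x ∈ S) →
        (∀ x ∈ S, ∀ y ∈ S, ∀ z, H.N x y z ≠ 0 → z ∈ S) →
        (∀ x : A, ∀ h ∈ S, ∀ y, 0 < H.coeff [x, h, H.inv x] y → y ∈ S) →
        H.ComL L0 ⊆ S) := by
  obtain ⟨L₀, hstable⟩ := H.exists_forall_ge_comL_eq
  refine ⟨H.comL_subset_comL_succ, L₀, hstable, fun x => H.inv_mem_comL, ?_, ?_,
    fun S hne hinv hmul hconj => H.comL_subset_of_supernormal hne hinv hmul hconj L₀⟩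
  · intro x hx y hy z hz
    rw [← hstable (L₀ + L₀) le_add_self]
    exact H.mem_comL_add hx hy ((H.N_nonneg x y z).lt_of_ne' hz)
  · intro x h hh y hy
    obtain ⟨t, ht, hty⟩ := H.coeff_conj_pos_iff.mp hy
    rw [← hstable (2 * L₀ + 1) (by omega)]
    exact H.mem_comL_of_conj hh ht hty
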